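/- Let p₀, …, p_k be points in ℝ² such that all edge vectors p_{i+1} − p_i lie in a closed wedge of width 90°. Then for every i ≤ j, the vertices p_i, p_j satisfy ‖p_j − p_i‖ ≤ Σ_{l=i}^{j-1} ‖p_{l+1} − p_l‖ ≤ √2 · ‖p_j − p_i‖, i.e., every subpath between two vertices also has stretch factor at most √2 (the increasing-chord property restricted to vertices follows). -/

import Mathlib

/-! The edges telescope to `p j - p i`, so the lower bound is the triangle inequality. For the
upper bound, project onto the bisector `d` of the wedge: each edge `e` has
`⟪e, d⟫ ≥ ‖e‖ cos 45°`, and these projections add up to `⟪p j - p i, d⟫ ≤ ‖p j - p i‖`. -/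

open Real

noncomputable section

/-- Euclidean dot product of two plane vectors (represented as complex numbers). -/
def dot2 (u v : ℂ) : ℝ := u.re * v.re + u.im * v.im

lemma dot2_eq_inner (u v : ℂ) : dot2 u v = inner ℝ u v := by
  simp only [dot2, Complex.inner, Complex.mul_re, Complex.conj_re, Complex.conj_im]
  ring

lemma sum_norm_mul_le_norm_sum {E ι : Type*} [NormedAddCommGroup E] [InnerProductSpace ℝ E]
    (s : Finset ι) (v : ι → E) {d : E} (hd : ‖d‖ ≤ 1) {c : ℝ}
    (hv : ∀ l ∈ s, ‖v l‖ * c ≤ inner ℝ (v l) d) :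
    (∑ l ∈ s, ‖v l‖) * c ≤ ‖∑ l ∈ s, v l‖ :=
  calc (∑ l ∈ s, ‖v l‖) * c = ∑ l ∈ s, ‖v l‖ * c := Finset.sum_mul _ _ _
    _ ≤ ∑ l ∈ s, inner ℝ (v l) d := Finset.sum_le_sum hv
    _ = inner ℝ (∑ l ∈ s, v l) d := (sum_inner _ _ _).symm
    _ ≤ ‖∑ l ∈ s, v l‖ * ‖d‖ := real_inner_le_norm _ _
    _ ≤ ‖∑ l ∈ s, v l‖ := mul_le_of_le_one_right (norm_nonneg _) hd

/-- If all edge vectors of a polygonal path lie in a common closed wedge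
of width `90°`, then every subpath between two vertices has stretch factor at most `√2`:
`‖p j - p i‖ ≤ Σ_{l=i}^{j-1} ‖p (l+1) - p l‖ ≤ √2 * ‖p j - p i‖`. -/
theorem angle_monotone_90_increasing_chord (k : ℕ) (p : ℕ → ℂ)
    (h : ∃ d : ℂ, ‖d‖ = 1 ∧ ∀ i < k,
      ‖p (i + 1) - p i‖ * Real.cos (π / 4) ≤ dot2 (p (i + 1) - p i) d) :
    ∀ i j : ℕ, i ≤ j → j ≤ k →
      ‖p j - p i‖ ≤ ∑ l ∈ Finset.Ico i j, ‖p (l + 1) - p l‖ ∧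
      ∑ l ∈ Finset.Ico i j, ‖p (l + 1) - p l‖ ≤ Real.sqrt 2 * ‖p j - p i‖ := by
  obtain ⟨d, hd, hedge⟩ := h
  intro i j hij hjk
  have htel : ∑ l ∈ Finset.Ico i j, (p (l + 1) - p l) = p j - p i := Finset.sum_Ico_sub p hij
  refine ⟨htel ▸ norm_sum_le _ _, ?_⟩
  have hcone : (∑ l ∈ Finset.Ico i j, ‖p (l + 1) - p l‖) * (√2 / 2) ≤ ‖p j - p i‖ := by
    rw [← htel, ← cos_pi_div_four]
    refine sum_norm_mul_le_norm_sum _ _ hd.le fun l hl => ?_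
    rw [← dot2_eq_inner]
    exact hedge l ((Finset.mem_Ico.mp hl).2.trans_le hjk)
  have hsqrt : √2 * (√2 / 2) = 1 := by
    rw [← mul_div_assoc, mul_self_sqrt zero_le_two, div_self two_ne_zero]
  calc ∑ l ∈ Finset.Ico i j, ‖p (l + 1) - p l‖
      = √2 * ((∑ l ∈ Finset.Ico i j, ‖p (l + 1) - p l‖) * (√2 / 2)) := by
        rw [mul_left_comm, hsqrt, mul_one]
    _ ≤ √2 * ‖p j - p i‖ := mul_le_mul_of_nonneg_left hcone (sqrt_nonneg 2)
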